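/- Let q : ℕ → ℝ be nonnegative and nondecreasing with q_1 > 0, let s : ℕ → ℝ, set Q_n := ∑_{j=1}^{n-1} q_j and σ_j := (1/j)·∑_{k=1}^{j} s_k. Then for every n ≥ 2, |(1/Q_n)·∑_{j=1}^{n-1} q_j s_j| ≤ ((2·(n−1)·q_{n-1} − Q_n)/Q_n) · sup_{1 ≤ j ≤ n-1} |σ_j|. In particular, if (n−1)·q_{n-1} ≤ c·Q_n for some c ≥ 1, the left-hand side is at most (2c − 1)·sup_{1 ≤ j ≤ n-1}|σ_j|. -/

import Mathlib

/-!
Write `S j = s 1 + ⋯ + s j = j σ j`, so that `|S j| ≤ j M` with `M = max_{j ≤ m} |σ j|`, `m = n - 1`.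
Abel summation gives `∑_{j ≤ m} q j s j = q m S m - ∑_{j < m} (q (j+1) - q j) S j`. Since `q` is
nondecreasing and nonnegative, every coefficient `q m`, `q (j+1) - q j` is nonnegative, so the
modulus is at most `(m q m + ∑_{j < m} (q (j+1) - q j) j) M`, and the same summation by parts
with `s ≡ 1` evaluates the bracket as `2 m q m - Q`.
-/

open Finset

theorem sum_Icc_mul_eq_mul_sum_sub_sum_Ico {R : Type*} [CommRing R] (q s : ℕ → R) (m : ℕ) :
    ∑ j ∈ Icc 1 m, q j * s j =
      q m * ∑ k ∈ Icc 1 m, s k - ∑ j ∈ Ico 1 m, (q (j + 1) - q j) * ∑ k ∈ Icc 1 j, s k := by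
  induction m with
  | zero => simp
  | succ m ih =>
    rcases Nat.eq_zero_or_pos m with rfl | hm
    · simp
    rw [sum_Icc_succ_top (by omega), ih, sum_Ico_succ_top hm, sum_Icc_succ_top (by omega) s]
    ring

theorem sum_Ico_sub_mul_natCast {R : Type*} [CommRing R] (q : ℕ → R) (m : ℕ) :
    ∑ j ∈ Ico 1 m, (q (j + 1) - q j) * (j : R) = m * q m - ∑ j ∈ Icc 1 m, q j := by
  have := sum_Icc_mul_eq_mul_sum_sub_sum_Ico q (fun _ => 1) m
  simp only [mul_one, sum_const, Nat.card_Icc, add_tsub_cancel_right, nsmul_eq_mul] at this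
  linear_combination this

theorem abs_sum_Icc_mul_le_of_monotone {q : ℕ → ℝ} (hmono : Monotone q) (hq1 : 0 ≤ q 1)
    {s : ℕ → ℝ} {m : ℕ} {M : ℝ} (hS : ∀ j ∈ Icc 1 m, |∑ k ∈ Icc 1 j, s k| ≤ j * M) :
    |∑ j ∈ Icc 1 m, q j * s j| ≤ (2 * m * q m - ∑ j ∈ Icc 1 m, q j) * M := by
  rcases Nat.eq_zero_or_pos m with rfl | hm
  · simp
  have hqm : 0 ≤ q m := hq1.trans (hmono hm)
  have hstep : ∀ j, 0 ≤ q (j + 1) - q j := fun j => sub_nonneg.mpr (hmono j.le_succ)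
  rw [sum_Icc_mul_eq_mul_sum_sub_sum_Ico]
  calc |q m * ∑ k ∈ Icc 1 m, s k - ∑ j ∈ Ico 1 m, (q (j + 1) - q j) * ∑ k ∈ Icc 1 j, s k|
      ≤ q m * |∑ k ∈ Icc 1 m, s k| + ∑ j ∈ Ico 1 m, (q (j + 1) - q j) * |∑ k ∈ Icc 1 j, s k| := by
        refine (abs_sub _ _).trans (add_le_add ?_ ((abs_sum_le_sum_abs _ _).trans_eq ?_))
        · rw [abs_mul, abs_of_nonneg hqm]
        · simp only [abs_mul, abs_of_nonneg (hstep _)]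
    _ ≤ q m * (m * M) + ∑ j ∈ Ico 1 m, (q (j + 1) - q j) * (j * M) := by
        gcongr with j hj
        · exact hS m (right_mem_Icc.mpr hm)
        · exact hstep j
        · exact hS j (Ico_subset_Icc_self hj)
    _ = (2 * m * q m - ∑ j ∈ Icc 1 m, q j) * M := by
        simp only [← mul_assoc, ← sum_mul, sum_Ico_sub_mul_natCast]
        ring

theorem Tmean_dominated_by_Fejer_max_nondecreasing
    (q : ℕ → ℝ) (hmono : ∀ j, q j ≤ q (j+1)) (hq1 : 0 < q 1)
    (s : ℕ → ℝ) (n : ℕ) (hn : 2 ≤ n) :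
    (|(1 / (∑ j ∈ Finset.Icc 1 (n-1), q j)) * ∑ j ∈ Finset.Icc 1 (n-1), q j * s j| ≤
      ((2 * ((n : ℝ) - 1) * q (n-1) - ∑ j ∈ Finset.Icc 1 (n-1), q j)
          / (∑ j ∈ Finset.Icc 1 (n-1), q j)) *
        (Finset.Icc 1 (n-1)).sup' (Finset.nonempty_Icc.mpr (by omega))
          (fun j => |(1 / (j : ℝ)) * ∑ k ∈ Finset.Icc 1 j, s k|)) ∧
    ∀ c : ℝ, 1 ≤ c → ((n : ℝ) - 1) * q (n-1) ≤ c * ∑ j ∈ Finset.Icc 1 (n-1), q j →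
      |(1 / (∑ j ∈ Finset.Icc 1 (n-1), q j)) * ∑ j ∈ Finset.Icc 1 (n-1), q j * s j| ≤
        (2 * c - 1) *
          (Finset.Icc 1 (n-1)).sup' (Finset.nonempty_Icc.mpr (by omega))
            (fun j => |(1 / (j : ℝ)) * ∑ k ∈ Finset.Icc 1 j, s k|) := by
  have hmono : Monotone q := monotone_nat_of_le_succ hmono
  rw [show (n : ℝ) - 1 = (n - 1 : ℕ) by rw [Nat.cast_sub (by omega), Nat.cast_one]]
  set m := n - 1
  have hm : 1 ∈ Icc 1 m := left_mem_Icc.mpr (by omega)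
  set Q := ∑ j ∈ Icc 1 m, q j
  set σ : ℕ → ℝ := fun j => |(1 / (j : ℝ)) * ∑ k ∈ Icc 1 j, s k|
  set M := (Icc 1 m).sup' ⟨1, hm⟩ σ
  have hQ : 0 < Q :=
    hq1.trans_le (single_le_sum (fun j hj => hq1.le.trans (hmono (mem_Icc.mp hj).1)) hm)
  have hM : 0 ≤ M := (abs_nonneg _).trans (le_sup' σ hm)
  have hS : ∀ j ∈ Icc 1 m, |∑ k ∈ Icc 1 j, s k| ≤ j * M := by
    intro j hj
    have hσj : |(1 / (j : ℝ)) * ∑ k ∈ Icc 1 j, s k| ≤ M := le_sup' σ hj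
    have hj : (0 : ℝ) < j := by exact_mod_cast (mem_Icc.mp hj).1
    rwa [abs_mul, abs_of_pos (one_div_pos.mpr hj), one_div_mul_eq_div, div_le_iff₀' hj] at hσj
  have hmean : |1 / Q * ∑ j ∈ Icc 1 m, q j * s j| ≤ (2 * m * q m - Q) / Q * M := by
    rw [abs_mul, abs_of_pos (one_div_pos.mpr hQ), one_div_mul_eq_div, div_mul_eq_mul_div,
      div_le_div_iff_of_pos_right hQ]
    exact abs_sum_Icc_mul_le_of_monotone hmono hq1.le hS
  refine ⟨hmean, fun c _ hc => hmean.trans (mul_le_mul_of_nonneg_right ?_ hM)⟩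
  rw [div_le_iff₀ hQ]
  linarith
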